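/- arXiv:2110.14877 — 5 statements merged into one kernel-verified Lean document; each statement's English description precedes it below -/
import Mathlib

section
/- For any real x and real a > 0, one has |x|^a = (Γ(a+1)/(2πi)) ∫_{1+iℝ} (e^{zx} + e^{-zx})/z^{a+1} dz, where the contour runs from 1-i∞ to 1+i∞ and z^{a+1} is the principal branch with cut along the negative real axis. -/
/-!
Let `g(v) = v₊ ^ a * e^{-v}`. For `Re b > 0` the Gamma integral gives
`∫₀^∞ v^(s-1) e^{-bv} dv = Γ(s) / b^s` (known for real `b`, extended by analytic continuation in
`b`), so `𝓕 g (ξ) = Γ(a+1) / (1 + 2πiξ)^(a+1)`. For `a > 0` this is integrable and `g` is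
continuous, so Fourier inversion at `u` reads, after the substitution `t = 2πξ`,
`Γ(a+1) ∫ e^{(1+it)u} / (1+it)^(a+1) dt = 2π u₊^a`. Adding the cases `u = x` and `u = -x`
gives `|x|^a`.
-/

open Complex MeasureTheory Real Set Filter Topology FourierTransform

section GammaIntegral

lemma integrableOn_rpow_mul_exp_neg_mul {p c : ℝ} (hp : -1 < p) (hc : 0 < c) :
    IntegrableOn (fun t : ℝ => t ^ p * Real.exp (-(c * t))) (Ioi 0) := by
  simpa using integrableOn_rpow_mul_exp_neg_mul_rpow hp one_pos hc

lemma norm_cpow_mul_cexp_neg_mul (s b : ℂ) {t : ℝ} (ht : 0 < t) :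
    ‖(t : ℂ) ^ (s - 1) * cexp (-(b * t))‖ = t ^ (s.re - 1) * Real.exp (-(b.re * t)) := by
  simp [norm_cpow_eq_rpow_re_of_pos ht, Complex.norm_exp]

lemma continuousOn_cpow_mul_cexp_neg_mul (s b : ℂ) :
    ContinuousOn (fun t : ℝ => (t : ℂ) ^ (s - 1) * cexp (-(b * t))) (Ioi 0) := fun t ht =>
  ((continuousAt_ofReal_cpow_const _ _ (Or.inr (ne_of_gt ht))).mul
    (by fun_prop)).continuousWithinAt

lemma integrableOn_cpow_mul_cexp_neg_mul {s b : ℂ} (hs : 0 < s.re) (hb : 0 < b.re) :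
    IntegrableOn (fun t : ℝ => (t : ℂ) ^ (s - 1) * cexp (-(b * t))) (Ioi 0) := by
  refine (integrableOn_rpow_mul_exp_neg_mul (p := s.re - 1) (by linarith) hb).mono'
    ((continuousOn_cpow_mul_cexp_neg_mul s b).aestronglyMeasurable measurableSet_Ioi) ?_
  filter_upwards [self_mem_ae_restrict measurableSet_Ioi] with t ht
  exact (norm_cpow_mul_cexp_neg_mul s b ht).le

lemma differentiableOn_integral_cpow_mul_cexp_neg_mul {s : ℂ} (hs : 0 < s.re) :
    DifferentiableOn ℂ (fun b : ℂ => ∫ t : ℝ in Ioi 0, (t : ℂ) ^ (s - 1) * cexp (-(b * t)))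
      {b | 0 < b.re} := by
  intro b₀ hb₀
  set ε := b₀.re / 2 with hε_def
  have hε : 0 < ε := half_pos hb₀
  have hball : ∀ b ∈ Metric.ball b₀ ε, ε ≤ b.re := fun b hb => by
    have := (abs_re_le_norm (b - b₀)).trans_lt (mem_ball_iff_norm.1 hb)
    rw [sub_re] at this
    linarith [(abs_lt.1 this).1, hε_def]
  have hderiv_bound : ∀ᵐ t : ℝ ∂volume.restrict (Ioi 0), ∀ b ∈ Metric.ball b₀ ε,
      ‖-(t : ℂ) * ((t : ℂ) ^ (s - 1) * cexp (-(b * t)))‖ ≤ t ^ s.re * Real.exp (-(ε * t)) := by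
    filter_upwards [self_mem_ae_restrict measurableSet_Ioi] with t (ht : 0 < t) b hb
    rw [norm_mul, norm_neg, norm_real, Real.norm_of_nonneg ht.le,
      norm_cpow_mul_cexp_neg_mul s b ht, ← mul_assoc,
      ← Real.rpow_one_add' ht.le (by linarith), add_sub_cancel]
    gcongr
    exact hball b hb
  have hasDeriv : ∀ t : ℝ, ∀ b ∈ Metric.ball b₀ ε,
      HasDerivAt (fun b : ℂ => (t : ℂ) ^ (s - 1) * cexp (-(b * t)))
        (-t * ((t : ℂ) ^ (s - 1) * cexp (-(b * t)))) b := fun t b _ =>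
    ((hasDerivAt_mul_const (t : ℂ)).neg.cexp.const_mul _).congr_deriv
      (by rw [Pi.neg_apply]; ring)
  exact (hasDerivAt_integral_of_dominated_loc_of_deriv_le (μ := volume.restrict (Ioi 0))
    (Metric.ball_mem_nhds b₀ hε)
    (Eventually.of_forall fun b =>
      (continuousOn_cpow_mul_cexp_neg_mul s b).aestronglyMeasurable measurableSet_Ioi)
    (integrableOn_cpow_mul_cexp_neg_mul hs hb₀)
    ((continuous_ofReal.neg.continuousOn.mul
      (continuousOn_cpow_mul_cexp_neg_mul s b₀)).aestronglyMeasurable measurableSet_Ioi)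
    hderiv_bound (integrableOn_rpow_mul_exp_neg_mul (by linarith) hε)
    (Eventually.of_forall hasDeriv)).2.differentiableAt.differentiableWithinAt

lemma integral_cpow_mul_cexp_neg_mul_Ioi_of_re_pos {s b : ℂ} (hs : 0 < s.re) (hb : 0 < b.re) :
    ∫ t : ℝ in Ioi 0, (t : ℂ) ^ (s - 1) * cexp (-(b * t)) = Complex.Gamma s / b ^ s := by
  have hU : IsOpen {b : ℂ | 0 < b.re} := isOpen_lt continuous_const continuous_re
  have hG : DifferentiableOn ℂ (fun b : ℂ => Complex.Gamma s / b ^ s) {b | 0 < b.re} :=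
    fun b (hb : 0 < b.re) => (differentiableAt_const _).div
      (differentiableAt_id.cpow_const (Or.inl hb))
      (cpow_ne_zero_iff.2 <| Or.inl (ne_zero_of_re_pos hb)) |>.differentiableWithinAt
  have hreal : Tendsto ((↑) : ℝ → ℂ) (𝓝[≠] 1) (𝓝[≠] 1) :=
    tendsto_nhdsWithin_iff.2 ⟨tendsto_nhdsWithin_of_tendsto_nhds continuous_ofReal.continuousAt,
      eventually_nhdsWithin_iff.2 (Eventually.of_forall fun _ h => ofReal_ne_one.2 h)⟩
  refine ((differentiableOn_integral_cpow_mul_cexp_neg_mul hs).analyticOnNhd hU)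
    |>.eqOn_of_preconnected_of_frequently_eq (hG.analyticOnNhd hU)
      (convex_halfSpace_re_gt 0).isPreconnected (z₀ := 1) (by simp)
      (hreal.frequently (Eventually.frequently ?_)) hb
  filter_upwards [nhdsWithin_le_nhds (eventually_gt_nhds one_pos)] with r hr
  rw [integral_cpow_mul_exp_neg_mul_Ioi hs hr, one_div,
    inv_cpow _ _ (by simp [arg_ofReal_of_nonneg hr.le, pi_ne_zero.symm]), div_eq_inv_mul]

end GammaIntegral

section VerticalLine

lemma one_add_mul_I_mem_slitPlane (t : ℝ) : 1 + t * I ∈ slitPlane :=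
  Or.inl (by simp)

lemma integrable_inv_one_add_mul_I_cpow {s : ℝ} (hs : 1 < s) :
    Integrable fun t : ℝ => ((1 + t * I) ^ (s : ℂ))⁻¹ := by
  have hcont : Continuous fun t : ℝ => ((1 + t * I) ^ (s : ℂ))⁻¹ :=
    ((by fun_prop : Continuous fun t : ℝ => 1 + t * I).cpow continuous_const
      one_add_mul_I_mem_slitPlane).inv₀
      fun t => cpow_ne_zero_iff.2 (Or.inl (slitPlane_ne_zero (one_add_mul_I_mem_slitPlane t)))
  have hnorm (t : ℝ) : ‖((1 + t * I) ^ (s : ℂ))⁻¹‖ = (1 + ‖t‖ ^ 2) ^ (-s / 2) := by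
    rw [norm_inv, norm_cpow_real, ← ofReal_one, norm_add_mul_I, Real.sqrt_eq_rpow,
      ← Real.rpow_mul (by positivity), Real.norm_eq_abs, sq_abs, neg_div,
      Real.rpow_neg (by positivity)]
    ring_nf
  refine (integrable_norm_iff hcont.aestronglyMeasurable).1 ?_
  simpa only [hnorm] using
    integrable_rpow_neg_one_add_norm_sq (E := ℝ) (μ := volume) (by simpa using hs)

lemma integrable_cexp_mul_div_cpow {s : ℝ} (hs : 1 < s) (u : ℝ) :
    Integrable fun t : ℝ => cexp ((1 + t * I) * u) / (1 + t * I) ^ (s : ℂ) := by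
  simp_rw [div_eq_mul_inv]
  refine (integrable_inv_one_add_mul_I_cpow hs).bdd_mul (c := Real.exp u)
    (by fun_prop : Continuous fun t : ℝ => cexp ((1 + t * I) * u)).aestronglyMeasurable
    (Eventually.of_forall fun t => ?_)
  simp [Complex.norm_exp]

end VerticalLine

noncomputable def posPartRpowMulExpNeg (a v : ℝ) : ℂ := ((max v 0 ^ a : ℝ) : ℂ) * cexp (-v)

section posPartRpowMulExpNeg

variable {a : ℝ}

lemma posPartRpowMulExpNeg_of_nonpos (ha : a ≠ 0) {v : ℝ} (hv : v ≤ 0) :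
    posPartRpowMulExpNeg a v = 0 := by
  simp [posPartRpowMulExpNeg, max_eq_right hv, Real.zero_rpow ha]

lemma posPartRpowMulExpNeg_of_pos {v : ℝ} (hv : 0 < v) :
    posPartRpowMulExpNeg a v = (v : ℂ) ^ (a : ℂ) * cexp (-v) := by
  rw [posPartRpowMulExpNeg, max_eq_left hv.le, ofReal_cpow hv.le]

lemma continuous_posPartRpowMulExpNeg (ha : 0 ≤ a) : Continuous (posPartRpowMulExpNeg a) := by
  unfold posPartRpowMulExpNeg
  fun_prop (disch := exact Or.inr ha)

lemma re_ofReal_add_one_pos (ha : 0 < a) : 0 < ((a : ℂ) + 1).re := by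
  rw [add_re, ofReal_re, one_re]
  linarith

lemma integrable_posPartRpowMulExpNeg (ha : 0 < a) : Integrable (posPartRpowMulExpNeg a) := by
  refine (integrableOn_iff_integrable_of_support_subset (s := Ioi 0) fun v hv => ?_).1 ?_
  · by_contra h
    exact hv (posPartRpowMulExpNeg_of_nonpos ha.ne' (not_lt.1 h))
  · refine (integrableOn_cpow_mul_cexp_neg_mul (re_ofReal_add_one_pos ha) (b := 1) one_pos)
      |>.congr_fun (fun v (hv : 0 < v) => ?_) measurableSet_Ioi
    simp [posPartRpowMulExpNeg_of_pos hv]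

lemma fourier_posPartRpowMulExpNeg (ha : 0 < a) (ξ : ℝ) :
    𝓕 (posPartRpowMulExpNeg a) ξ =
      Complex.Gamma (a + 1) / (1 + (2 * π * ξ : ℝ) * I) ^ ((a : ℂ) + 1) := by
  have hb : 0 < (1 + (2 * π * ξ : ℝ) * I).re := by simp
  rw [← integral_cpow_mul_cexp_neg_mul_Ioi_of_re_pos (re_ofReal_add_one_pos ha) hb,
    Real.fourier_real_eq_integral_exp_smul, ← setIntegral_eq_integral_of_forall_compl_eq_zero
      fun v (hv : ¬ 0 < v) => by
        rw [posPartRpowMulExpNeg_of_nonpos ha.ne' (not_lt.1 hv), smul_zero]]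
  refine setIntegral_congr_fun measurableSet_Ioi fun v (hv : 0 < v) => ?_
  rw [posPartRpowMulExpNeg_of_pos hv, add_sub_cancel_right, smul_eq_mul, mul_left_comm,
    ← Complex.exp_add]
  congr 2
  push_cast
  ring

lemma integrable_fourier_posPartRpowMulExpNeg (ha : 0 < a) :
    Integrable (𝓕 (posPartRpowMulExpNeg a)) := by
  refine (((integrable_inv_one_add_mul_I_cpow (s := a + 1) (by linarith)).comp_mul_left'
    two_pi_pos.ne').const_mul (Complex.Gamma (a + 1))).congr (Eventually.of_forall fun ξ => ?_)
  rw [fourier_posPartRpowMulExpNeg ha, div_eq_mul_inv]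
  push_cast
  rfl

end posPartRpowMulExpNeg

theorem Gamma_mul_integral_cexp_mul_div_cpow {a : ℝ} (ha : 0 < a) (u : ℝ) :
    (Real.Gamma (a + 1) : ℂ) * ∫ t : ℝ, cexp ((1 + t * I) * u) / (1 + t * I) ^ ((a : ℂ) + 1) =
      2 * π * (max u 0 ^ a : ℝ) := by
  set Φ : ℝ → ℂ := fun t =>
    cexp (t * u * I) * (Complex.Gamma (a + 1) / (1 + t * I) ^ ((a : ℂ) + 1))
  -- Fourier inversion at `u`, followed by the substitution `t = 2πξ`
  have hinv : posPartRpowMulExpNeg a u = (2 * π : ℂ)⁻¹ * ∫ t, Φ t := by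
    have h := Measure.integral_comp_mul_left Φ (2 * π)
    rw [abs_of_pos (inv_pos.2 two_pi_pos), real_smul] at h
    push_cast at h
    rw [← h, ← (integrable_posPartRpowMulExpNeg ha).fourierInv_fourier_eq
      (integrable_fourier_posPartRpowMulExpNeg ha)
      (continuous_posPartRpowMulExpNeg ha.le).continuousAt, fourierInv_eq']
    congr 1 with ξ
    rw [fourier_posPartRpowMulExpNeg ha, smul_eq_mul]
    simp only [Φ, RCLike.inner_apply, conj_trivial]
    push_cast
    ring_nf
  rw [posPartRpowMulExpNeg, eq_inv_mul_iff_mul_eq₀ (by exact_mod_cast two_pi_pos.ne')] at hinv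
  have hsplit (t : ℝ) : Complex.Gamma (a + 1) *
      (cexp ((1 + t * I) * u) / (1 + t * I) ^ ((a : ℂ) + 1)) = cexp u * Φ t := by
    rw [show (1 + t * I) * u = (u : ℂ) + t * u * I by ring, Complex.exp_add]
    ring
  have hexp : cexp u * cexp (-u) = 1 := by
    rw [← Complex.exp_add, add_neg_cancel, Complex.exp_zero]
  rw [← Complex.Gamma_ofReal, ← integral_const_mul]
  push_cast
  simp_rw [hsplit]
  rw [integral_const_mul]
  linear_combination (-cexp u) * hinv + (2 * π * (max u 0 ^ a : ℝ)) * hexp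

lemma max_rpow_add_max_neg_rpow {a : ℝ} (ha : a ≠ 0) (x : ℝ) :
    max x 0 ^ a + max (-x) 0 ^ a = |x| ^ a := by
  rcases le_total x 0 with hx | hx
  · simp [max_eq_right hx, max_eq_left (neg_nonneg.2 hx), abs_of_nonpos hx, Real.zero_rpow ha]
  · simp [max_eq_left hx, max_eq_right (neg_nonpos.2 hx), abs_of_nonneg hx, Real.zero_rpow ha]

/-- For any real `x` and `a > 0`,
`|x|^a = (Γ(a+1)/(2πi)) ∫_{1+iℝ} (e^{zx} + e^{-zx})/z^{a+1} dz`,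
where the contour `z = 1 + i t`, `t : ℝ`, runs from `1 - i∞` to `1 + i∞`
(so `dz = i dt`), and `z^(a+1)` is the principal branch. -/
theorem abs_rpow_eq_contour_integral (x a : ℝ) (ha : 0 < a) :
    ((|x| ^ a : ℝ) : ℂ) =
      (Real.Gamma (a + 1) : ℂ) / (2 * Real.pi * Complex.I) *
        ∫ t : ℝ,
          (Complex.exp ((1 + t * Complex.I) * x) + Complex.exp (-((1 + t * Complex.I) * x))) /
              (1 + t * Complex.I) ^ ((a : ℂ) + 1) * Complex.I := by
  have hint (u : ℝ) := integrable_cexp_mul_div_cpow (s := a + 1) (by linarith) u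
  push_cast at hint
  have hsplit (t : ℝ) :
      (cexp ((1 + t * I) * x) + cexp (-((1 + t * I) * x))) / (1 + t * I) ^ ((a : ℂ) + 1) * I =
        (cexp ((1 + t * I) * x) / (1 + t * I) ^ ((a : ℂ) + 1) +
          cexp ((1 + t * I) * ↑(-x)) / (1 + t * I) ^ ((a : ℂ) + 1)) * I := by
    push_cast
    ring_nf
  simp_rw [hsplit]
  rw [integral_mul_const, integral_add (hint x) (hint (-x)),
    ← max_rpow_add_max_neg_rpow ha.ne' x, ofReal_add, div_mul_eq_mul_div,
    eq_div_iff (by simp [pi_ne_zero])]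
  linear_combination (-I) * (Gamma_mul_integral_cexp_mul_div_cpow ha x +
    Gamma_mul_integral_cexp_mul_div_cpow ha (-x))
end

section
/- Let X be a real random variable such that for every k > 0, lim_{R→∞} P(|X| > kR)/P(|X| > R) = k^{−α} (with P(|X|>R) > 0 for all R), and let δ > α. Then E[|X|^δ] = ∞. -/
open MeasureTheory Real ENNReal Filter

/-- If a real random variable `X` has a regularly varying tail of index `α`,
i.e. `P(|X| > kR)/P(|X| > R) → k^{-α}` as `R → ∞` for every `k > 0`
(with `P(|X| > R) > 0` for all `R`), then `E[|X|^δ] = ∞` for every `δ > α`. -/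
theorem regular_variation_moment_infinite
    {Ω : Type*} [MeasurableSpace Ω] (μ : Measure Ω) [IsProbabilityMeasure μ]
    (X : Ω → ℝ) (hX : Measurable X) (α δ : ℝ) (hα : 0 ≤ α) (hδ : α < δ)
    (hpos : ∀ R : ℝ, 0 < μ {ω | R < |X ω|})
    (htail : ∀ k : ℝ, 0 < k →
      Tendsto (fun R : ℝ => (μ {ω | k * R < |X ω|}).toReal / (μ {ω | R < |X ω|}).toReal)
        atTop (nhds (k ^ (-α)))) :
    ∫⁻ ω, ENNReal.ofReal (|X ω| ^ δ) ∂μ = ⊤ := by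
  set β : ℝ := (α + δ) / 2 with hβdef
  have hαβ : α < β := by rw [hβdef]; linarith
  have hβδ : β < δ := by rw [hβdef]; linarith
  have hδ0 : 0 ≤ δ := le_of_lt (lt_of_le_of_lt hα hδ)
  have hfin : ∀ R : ℝ, μ {ω | R < |X ω|} ≠ ⊤ := fun R => measure_ne_top μ _
  have hPpos : ∀ R : ℝ, 0 < (μ {ω | R < |X ω|}).toReal := fun R =>
    ENNReal.toReal_pos (hpos R).ne' (hfin R)
  set c : ℝ := (2:ℝ) ^ (-β) with hc
  have hc_pos : 0 < c := Real.rpow_pos_of_pos two_pos _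
  have hclt : c < (2:ℝ) ^ (-α) :=
    (Real.rpow_lt_rpow_left_iff one_lt_two).mpr (by linarith)
  have hev : ∀ᶠ R in atTop,
      c ≤ (μ {ω | 2 * R < |X ω|}).toReal / (μ {ω | R < |X ω|}).toReal :=
    (htail 2 two_pos).eventually (eventually_ge_nhds hclt)
  obtain ⟨R1, hR1⟩ := eventually_atTop.mp hev
  set R0 : ℝ := max R1 1 with hR0
  have hR0_one : (1:ℝ) ≤ R0 := le_max_right _ _
  have hR0_pos : (0:ℝ) < R0 := lt_of_lt_of_le one_pos hR0_one
  have hR0_R1 : R1 ≤ R0 := le_max_left _ _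
  set P0 : ℝ := (μ {ω | R0 < |X ω|}).toReal with hP0
  -- iterated tail lower bound
  have hiter : ∀ n : ℕ, c ^ n * P0 ≤ (μ {ω | (2:ℝ) ^ n * R0 < |X ω|}).toReal := by
    intro n
    induction n with
    | zero => simp [hP0]
    | succ n ih =>
      have hRn : R1 ≤ (2:ℝ) ^ n * R0 := by
        have h1 : (1:ℝ) ≤ (2:ℝ) ^ n := one_le_pow₀ (by norm_num)
        nlinarith
      have hstep := hR1 _ hRn
      have hden := hPpos ((2:ℝ) ^ n * R0)
      have hstep' : c * (μ {ω | (2:ℝ) ^ n * R0 < |X ω|}).toReal ≤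
          (μ {ω | 2 * ((2:ℝ) ^ n * R0) < |X ω|}).toReal :=
        (le_div_iff₀ hden).mp hstep
      have hEq : (2:ℝ) ^ (n+1) * R0 = 2 * ((2:ℝ) ^ n * R0) := by ring
      rw [hEq]
      calc c ^ (n+1) * P0 = c * (c ^ n * P0) := by ring
        _ ≤ c * (μ {ω | (2:ℝ) ^ n * R0 < |X ω|}).toReal := by
            exact mul_le_mul_of_nonneg_left ih hc_pos.le
        _ ≤ _ := hstep'
  -- Chebyshev-type bound
  have hkey : ∀ T : ℝ, 0 ≤ T →
      ENNReal.ofReal (T ^ δ) * μ {ω | T < |X ω|} ≤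
        ∫⁻ ω, ENNReal.ofReal (|X ω| ^ δ) ∂μ := by
    intro T hT
    have hmeasg : Measurable fun ω => ENNReal.ofReal (|X ω| ^ δ) :=
      by fun_prop
    calc ENNReal.ofReal (T ^ δ) * μ {ω | T < |X ω|}
        = ∫⁻ _ in {ω | T < |X ω|}, ENNReal.ofReal (T ^ δ) ∂μ := by
          rw [setLIntegral_const]
      _ ≤ ∫⁻ ω in {ω | T < |X ω|}, ENNReal.ofReal (|X ω| ^ δ) ∂μ := by
          refine setLIntegral_mono hmeasg fun ω hω => ?_
          exact ENNReal.ofReal_le_ofReal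
            (Real.rpow_le_rpow hT (le_of_lt hω) hδ0)
      _ ≤ ∫⁻ ω, ENNReal.ofReal (|X ω| ^ δ) ∂μ := setLIntegral_le_lintegral _ _
  by_contra hI
  set I : ℝ≥0∞ := ∫⁻ ω, ENNReal.ofReal (|X ω| ^ δ) ∂μ with hIdef
  -- for every n, bⁿ * (R0^δ * P0) ≤ I.toReal where b = 2^(δ-β) > 1
  set b : ℝ := (2:ℝ) ^ (δ - β) with hb
  have hb_one : 1 < b := Real.one_lt_rpow_iff_of_pos two_pos |>.mpr
    (Or.inl ⟨one_lt_two, by linarith⟩)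
  have hbound : ∀ n : ℕ, b ^ n * (R0 ^ δ * P0) ≤ I.toReal := by
    intro n
    have hT : (0:ℝ) ≤ (2:ℝ) ^ n * R0 := by positivity
    have h1 := hkey _ hT
    have h2 : (((2:ℝ) ^ n * R0) ^ δ) * (μ {ω | (2:ℝ) ^ n * R0 < |X ω|}).toReal
        ≤ I.toReal := by
      have := ENNReal.toReal_mono hI h1
      rwa [ENNReal.toReal_mul, ENNReal.toReal_ofReal (Real.rpow_nonneg hT δ)] at this
    have h3 : b ^ n * (R0 ^ δ * P0) ≤
        (((2:ℝ) ^ n * R0) ^ δ) * (μ {ω | (2:ℝ) ^ n * R0 < |X ω|}).toReal := by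
      have hmul : (((2:ℝ) ^ n * R0) ^ δ) = ((2:ℝ) ^ n) ^ δ * R0 ^ δ :=
        Real.mul_rpow (by positivity) hR0_pos.le
      have hpowid : ((2:ℝ) ^ n) ^ δ * c ^ n = b ^ n := by
        rw [← Real.rpow_natCast (2:ℝ) n, ← Real.rpow_mul (by norm_num : (0:ℝ) ≤ 2),
          hc, ← Real.rpow_natCast ((2:ℝ) ^ (-β)) n,
          ← Real.rpow_mul (by norm_num : (0:ℝ) ≤ 2),
          ← Real.rpow_add two_pos, hb,
          ← Real.rpow_natCast ((2:ℝ) ^ (δ - β)) n,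
          ← Real.rpow_mul (by norm_num : (0:ℝ) ≤ 2)]
        ring_nf
      have := mul_le_mul_of_nonneg_left (hiter n)
        (by positivity : (0:ℝ) ≤ (((2:ℝ) ^ n * R0) ^ δ))
      calc b ^ n * (R0 ^ δ * P0)
          = (((2:ℝ) ^ n * R0) ^ δ) * (c ^ n * P0) := by
            rw [hmul, ← hpowid]; ring
        _ ≤ _ := this
    linarith
  have hK : 0 < R0 ^ δ * P0 := by
    have := hPpos R0
    positivity
  obtain ⟨n, hn⟩ := pow_unbounded_of_one_lt (I.toReal / (R0 ^ δ * P0)) hb_one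
  have := hbound n
  rw [div_lt_iff₀ hK] at hn
  linarith
end

section
/- Let H be a Borel probability measure on the unit sphere S of Herm(N) (matrices R with Tr R² = 1), invariant under conjugation by every unitary, and suppose H is purely atomic (a countable sum of point masses). Then there exists p ∈ [0,1] such that H = p·δ_{I_N/√N} + (1−p)·δ_{−I_N/√N}. -/
/-!
By invariance, every unitary conjugate of an atom `R` of `H` is an atom of the same mass, and a
finite measure has only finitely many atoms of a given positive mass. Conjugating by the phases
`diag(1, …, z, …, 1)`, `|z| = 1`, multiplies an off-diagonal entry `R i j` by `z`, so every
conjugate of an atom is diagonal. Conjugating a diagonal matrix by a suitable real reflection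
mixing the coordinates `i` and `j` creates an off-diagonal entry proportional to `d j - d i`, so an
atom is scalar, and `Tr R² = 1` leaves only `±I/√N`. Since `H` is carried by countably many atoms,
it is concentrated on these two points.
-/

open Matrix MeasureTheory Complex

/-- The Borel (= product) measurable structure on `N×N` complex matrices. -/
noncomputable instance matrixMeasurableSpace {N : ℕ} :
    MeasurableSpace (Matrix (Fin N) (Fin N) ℂ) :=
  (inferInstance : MeasurableSpace (Fin N → Fin N → ℂ))

instance Circle.instInfinite : Infinite Circle :=
  Set.infinite_univ_iff.mp <| isPreconnected_univ.infinite_of_nontrivial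
    ⟨1, trivial, -1, trivial, (Circle.neg_ne_self 1).symm⟩

theorem Circle.coe_mem_unitary (z : Circle) : (z : ℂ) ∈ unitary ℂ := by
  rw [Unitary.mem_iff_star_mul_self, star_def, conj_mul', Circle.norm_coe]
  norm_num

namespace MeasureTheory.Measure

variable {X : Type*} [MeasurableSpace X]

theorem measure_compl_eq_zero_of_countable {μ : Measure X} {D s : Set X} (hD : D.Countable)
    (hμD : μ Dᶜ = 0) (hs : ∀ x ∉ s, μ {x} = 0) : μ sᶜ = 0 := by
  have hDs : μ (D \ s) = 0 := by
    rw [← Set.biUnion_of_singleton (D \ s), measure_biUnion_null_iff (hD.mono Set.sdiff_subset)]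
    exact fun x hx => hs x hx.2
  refine measure_mono_null (fun x hx => ?_) (measure_union_null hμD hDs)
  by_cases hxD : x ∈ D
  exacts [Or.inr ⟨hxD, hx⟩, Or.inl hxD]

variable [MeasurableSingletonClass X]

theorem measure_singleton_eq_zero_of_injective (μ : Measure X) [IsFiniteMeasure μ]
    {ι : Type*} [Infinite ι] {f : ι → X} (hf : Function.Injective f) {m : ENNReal}
    (hm : ∀ i, μ {f i} = m) : m = 0 := by
  by_contra h
  have hdisj : Pairwise (Function.onFun Disjoint fun i => ({f i} : Set X)) := fun i j hij =>
    Set.disjoint_singleton.mpr (hf.ne hij)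
  have := tsum_meas_le_meas_iUnion_of_disjoint μ (fun i => measurableSet_singleton (f i)) hdisj
  simp only [hm, ENNReal.tsum_const_eq_top_of_ne_zero h, top_le_iff] at this
  exact measure_ne_top μ _ this

theorem eq_smul_dirac_add_smul_dirac {μ : Measure X} {a b : X} (hab : a ≠ b)
    (h : μ {a, b}ᶜ = 0) : μ = μ {a} • dirac a + μ {b} • dirac b := by
  rw [← restrict_singleton, ← restrict_singleton, ← restrict_union
    (Set.disjoint_singleton.mpr hab) (measurableSet_singleton b)]
  exact (restrict_eq_self_of_ae_mem (ae_iff.mpr h)).symm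

theorem exists_eq_smul_dirac_add_one_sub_smul_dirac {μ : Measure X} [IsProbabilityMeasure μ]
    {a b : X} (hab : a ≠ b) (h : μ {a, b}ᶜ = 0) :
    ∃ p : ℝ, 0 ≤ p ∧ p ≤ 1 ∧
      μ = ENNReal.ofReal p • dirac a + ENNReal.ofReal (1 - p) • dirac b := by
  have hsum : μ {a} + μ {b} = 1 := by
    rw [← measure_union (Set.disjoint_singleton.mpr hab) (measurableSet_singleton b),
      Set.singleton_union, ← prob_compl_eq_zero_iff ((measurableSet_singleton b).insert a), h]
  refine ⟨μ.real {a}, measureReal_nonneg, measureReal_le_one, ?_⟩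
  rw [ENNReal.ofReal_sub _ measureReal_nonneg, ofReal_measureReal, ENNReal.ofReal_one,
    ENNReal.sub_eq_of_eq_add_rev (measure_ne_top μ _) hsum.symm]
  exact eq_smul_dirac_add_smul_dirac hab h

end MeasureTheory.Measure

namespace Matrix

variable {n : Type*} [Fintype n]

theorem isStarProjection_vecMulVec_star {α : Type*} [CommRing α] [StarRing α] {v : n → α}
    (hv : star v ⬝ᵥ v = 1) : IsStarProjection (vecMulVec v (star v)) where
  isIdempotentElem := by rw [IsIdempotentElem, vecMulVec_mul_vecMulVec, hv, one_smul]
  isSelfAdjoint := by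
    rw [IsSelfAdjoint, star_eq_conjTranspose, conjTranspose_vecMulVec, star_star]

variable [DecidableEq n]

theorem diagonal_mem_unitaryGroup {α : Type*} [CommRing α] [StarRing α] {d : n → α}
    (hd : ∀ i, d i ∈ unitary α) : diagonal d ∈ unitaryGroup n α := by
  rw [mem_unitaryGroup_iff, star_eq_conjTranspose, diagonal_conjTranspose,
    diagonal_mul_diagonal, ← diagonal_one]
  exact congrArg diagonal (funext fun i => Unitary.mul_star_self_of_mem (hd i))

theorem diagonal_mul_mul_star_diagonal_apply {α : Type*} [CommRing α] [StarRing α]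
    (d : n → α) (R : Matrix n n α) (i j : n) :
    (diagonal d * R * star (diagonal d)) i j = d i * R i j * star (d j) := by
  simp [star_eq_conjTranspose, diagonal_conjTranspose, mul_diagonal, diagonal_mul]

theorem exists_unitary_conj_diagonal_apply_ne_zero {i j : n} (hij : i ≠ j) {d : n → ℂ}
    (hd : d i ≠ d j) : ∃ U ∈ unitaryGroup n ℂ, (U * diagonal d * star U) i j ≠ 0 := by
  -- For a real unit vector `v` on `{i, j}`, the `(i, j)` entry of the conjugate by the reflection
  -- `2 v vᴴ - 1` is `2 v i v j (2 v i ^ 2 - 1) (d i - d j)`; `v = (3/5, 4/5)` makes it nonzero.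
  set v : n → ℂ := Pi.single i (3 / 5) + Pi.single j (4 / 5)
  have hv : star v ⬝ᵥ v = 1 := by
    norm_num [v, dotProduct_add, hij, hij.symm, Pi.star_def, map_ofNat]
  set P := vecMulVec v (star v)
  have hP : IsStarProjection P := isStarProjection_vecMulVec_star hv
  refine ⟨2 * P - 1, hP.two_mul_sub_one_mem_unitary, ?_⟩
  have hW : star (2 * P - 1) = 2 * P - 1 := by
    simp [star_sub, hP.isSelfAdjoint.star_eq, two_mul]
  have hexp : (2 * P - 1) * diagonal d * (2 * P - 1) =
      4 * (P * diagonal d * P) - 2 * (P * diagonal d) - 2 * (diagonal d * P) + diagonal d := by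
    noncomm_ring
  have hentry : ((2 * P - 1) * diagonal d * star (2 * P - 1) : Matrix n n ℂ) i j =
      168 / 625 * (d j - d i) := by
    rw [hW, hexp]
    simp [P, v, vecMulVec_mul, mul_vecMulVec, vecMulVec_mulVec, vecMul_diagonal, mulVec_diagonal,
      vecMulVec_apply, dotProduct_add, Pi.star_def, map_ofNat, hij, hij.symm]
    ring
  rw [hentry]
  exact mul_ne_zero (by norm_num) (sub_ne_zero.mpr hd.symm)

theorem mem_range_scalar_of_forall_isDiag_conj {R : Matrix n n ℂ}
    (h : ∀ U ∈ unitaryGroup n ℂ, (U * R * star U).IsDiag) : R ∈ Set.range (scalar n) := by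
  obtain ⟨d, rfl⟩ : ∃ d, R = diagonal d :=
    ⟨R.diag, (by simpa using h 1 (one_mem _) : R.IsDiag).diagonal_diag.symm⟩
  have hd : ∀ i j, d i = d j := fun i j => by
    by_contra hne
    obtain ⟨U, hU, hUij⟩ := exists_unitary_conj_diagonal_apply_ne_zero (ne_of_apply_ne d hne) hne
    exact hUij (h U hU (ne_of_apply_ne d hne))
  rcases isEmpty_or_nonempty n with hn | ⟨⟨i⟩⟩
  · exact ⟨0, Subsingleton.elim _ _⟩
  · exact ⟨d i, by rw [scalar_apply]; exact congrArg diagonal (funext fun j => hd i j)⟩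

theorem scalar_eq_or_eq_neg_of_trace_mul_self_eq_one {c : ℂ}
    (h : trace (scalar n c * scalar n c) = 1) :
    scalar n c = (((Real.sqrt (Fintype.card n))⁻¹ : ℝ) : ℂ) • 1 ∨
      scalar n c = -((((Real.sqrt (Fintype.card n))⁻¹ : ℝ) : ℂ) • 1) := by
  rw [← map_mul, scalar_apply, trace_diagonal, Finset.sum_const, Finset.card_univ,
    nsmul_eq_mul] at h
  have hcard : (0 : ℝ) < Fintype.card n := by
    rcases (Fintype.card n).eq_zero_or_pos with h0 | h0
    · simp [h0] at h
    · exact_mod_cast h0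
  have hsq : c ^ 2 = (((Real.sqrt (Fintype.card n))⁻¹ : ℝ) : ℂ) ^ 2 := by
    rw [← ofReal_pow, inv_pow, Real.sq_sqrt hcard.le, ofReal_inv, ofReal_natCast]
    exact eq_inv_of_mul_eq_one_left (by linear_combination h)
  rw [scalar_apply, ← smul_one_eq_diagonal, ← neg_smul]
  rcases sq_eq_sq_iff_eq_or_eq_neg.mp hsq with hc | hc <;> rw [hc] <;> simp

end Matrix

instance matrixBorelSpace {N : ℕ} : BorelSpace (Matrix (Fin N) (Fin N) ℂ) :=
  inferInstanceAs (BorelSpace (Fin N → Fin N → ℂ))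

def IsUnitarilyInvariant {N : ℕ} (μ : Measure (Matrix (Fin N) (Fin N) ℂ)) : Prop :=
  ∀ U : unitaryGroup (Fin N) ℂ, μ.map (fun R => U.1 * R * star U.1) = μ

namespace IsUnitarilyInvariant

variable {N : ℕ} {μ : Measure (Matrix (Fin N) (Fin N) ℂ)}

theorem measure_singleton_conj (hμ : IsUnitarilyInvariant μ) (U : unitaryGroup (Fin N) ℂ)
    (R : Matrix (Fin N) (Fin N) ℂ) : μ {U.1 * R * star U.1} = μ {R} := by
  have hinj : Function.Injective fun M => U.1 * M * star U.1 :=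
    (Unitary.conjStarAlgAut ℂ _ U).injective
  conv_lhs => rw [← hμ U]
  rw [Measure.map_apply (by fun_prop) (measurableSet_singleton _),
    ← Set.image_singleton (f := fun M => U.1 * M * star U.1), hinj.preimage_image]

theorem isDiag_of_measure_singleton_ne_zero [IsFiniteMeasure μ] (hμ : IsUnitarilyInvariant μ)
    {R : Matrix (Fin N) (Fin N) ℂ} (hR : μ {R} ≠ 0) : R.IsDiag := by
  intro i j hij
  by_contra hRij
  let D : Circle → unitaryGroup (Fin N) ℂ := fun z =>
    ⟨diagonal (Pi.mulSingle i (z : ℂ)), diagonal_mem_unitaryGroup fun k => by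
      rw [Pi.mulSingle_apply]; split_ifs
      exacts [z.coe_mem_unitary, one_mem _]⟩
  have hinj : Function.Injective fun z => (D z).1 * R * star (D z).1 := fun z w h => by
    have := congrFun (congrFun h i) j
    simp only [D, diagonal_mul_mul_star_diagonal_apply, Pi.mulSingle_eq_same,
      Pi.mulSingle_eq_of_ne hij.symm, star_one, mul_one] at this
    exact Circle.ext (mul_right_cancel₀ hRij this)
  exact hR (Measure.measure_singleton_eq_zero_of_injective μ hinj
    fun z => hμ.measure_singleton_conj (D z) R)

theorem mem_range_scalar_of_measure_singleton_ne_zero [IsFiniteMeasure μ]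
    (hμ : IsUnitarilyInvariant μ) {R : Matrix (Fin N) (Fin N) ℂ} (hR : μ {R} ≠ 0) :
    R ∈ Set.range (scalar (Fin N)) :=
  mem_range_scalar_of_forall_isDiag_conj fun U hU =>
    hμ.isDiag_of_measure_singleton_ne_zero (by rwa [hμ.measure_singleton_conj ⟨U, hU⟩])

end IsUnitarilyInvariant

/-- An atomic Borel probability measure on the unit sphere of `Herm(N)`
(w.r.t. the Frobenius norm) that is invariant under unitary conjugation is a
convex combination of the point masses at `±I_N/√N`. -/
theorem atomic_invariant_spectral_measure {N : ℕ} (hN : 0 < N)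
    (H : Measure (Matrix (Fin N) (Fin N) ℂ)) [IsProbabilityMeasure H]
    (hsupp : H {R | ¬(R.IsHermitian ∧ Matrix.trace (R * R) = 1)} = 0)
    (hinv : ∀ U : Matrix.unitaryGroup (Fin N) ℂ,
      Measure.map (fun R => U.1 * R * star U.1) H = H)
    (hatomic : ∃ D : Set (Matrix (Fin N) (Fin N) ℂ), D.Countable ∧ H Dᶜ = 0) :
    ∃ p : ℝ, 0 ≤ p ∧ p ≤ 1 ∧
      H = ENNReal.ofReal p •
            Measure.dirac ((((Real.sqrt N)⁻¹ : ℝ) : ℂ) • (1 : Matrix (Fin N) (Fin N) ℂ)) +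
          ENNReal.ofReal (1 - p) •
            Measure.dirac (-((((Real.sqrt N)⁻¹ : ℝ) : ℂ) • (1 : Matrix (Fin N) (Fin N) ℂ))) := by
  set s : ℂ := (((Real.sqrt N)⁻¹ : ℝ) : ℂ)
  have hatoms : ∀ R, R ∉ ({s • 1, -(s • 1)} : Set (Matrix (Fin N) (Fin N) ℂ)) → H {R} = 0 := by
    intro R hR
    by_contra hR0
    have htr : trace (R * R) = 1 := by
      by_contra htr
      refine hR0 (measure_mono_null (Set.singleton_subset_iff.mpr ?_) hsupp)
      exact fun h => htr h.2
    obtain ⟨c, rfl⟩ := IsUnitarilyInvariant.mem_range_scalar_of_measure_singleton_ne_zero hinv hR0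
    exact hR (by simpa only [Set.mem_insert_iff, Set.mem_singleton_iff, Fintype.card_fin]
      using scalar_eq_or_eq_neg_of_trace_mul_self_eq_one htr)
  obtain ⟨D, hD, hDc⟩ := hatomic
  have hs : s ≠ 0 := by simp [s, hN.ne']
  have hne : s • (1 : Matrix (Fin N) (Fin N) ℂ) ≠ -(s • 1) := fun h =>
    hs (self_eq_neg.mp (by simpa using congrFun (congrFun h ⟨0, hN⟩) ⟨0, hN⟩))
  exact Measure.exists_eq_smul_dirac_add_one_sub_smul_dirac hne
    (Measure.measure_compl_eq_zero_of_countable hD hDc hatoms)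
end

section
/- For α ∈ (0,2], α ≠ 1, and u ∈ ℝ, one has |u|^α(1 − i·sgn(u)·tan(πα/2)) = (−iu)^α / cos(πα/2), where (−iu)^α denotes the principal complex power with branch cut along the negative real axis. -/
/-!
The number `-(i u)` has modulus `|u|` and argument `-sgn(u) π/2`, so its principal `α`-th power is
`|u|^α e^{-i sgn(u) πα/2} = |u|^α (cos(πα/2) - i sgn(u) sin(πα/2))`. Dividing by `cos(πα/2)`,
which on `(0, 2]` vanishes only at `α = 1`, gives the claim.
-/

open Real Complex

theorem Real.cos_pi_mul_div_two_ne_zero {α : ℝ} (h0 : 0 < α) (h2 : α ≤ 2) (h1 : α ≠ 1) :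
    Real.cos (π * α / 2) ≠ 0 := by
  rw [Ne, Real.cos_eq_zero_iff]
  rintro ⟨k, hk⟩
  have hα : α = 2 * k + 1 := by
    field_simp at hk
    linarith
  have hk0 : k = 0 := by
    have : (-1 : ℝ) < k ∧ (k : ℝ) < 1 := by constructor <;> linarith
    norm_cast at this
    omega
  exact h1 (by simp [hα, hk0])

theorem Complex.arg_neg_I_mul_ofReal (u : ℝ) : arg (-(I * u)) = -(Real.sign u * (π / 2)) := by
  rcases lt_trichotomy u 0 with hu | rfl | hu
  · have : -(I * u) = ((-u : ℝ) : ℂ) * I := by push_cast; ring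
    rw [this, arg_real_mul _ (neg_pos.2 hu), arg_I, Real.sign_of_neg hu]
    ring
  · simp
  · have : -(I * u) = (u : ℂ) * -I := by ring
    rw [this, arg_real_mul _ hu, arg_neg_I, Real.sign_of_pos hu, one_mul]

theorem Complex.log_neg_I_mul_ofReal (u : ℝ) :
    log (-(I * u)) = Real.log |u| - Real.sign u * (π / 2) * I := by
  rw [log, arg_neg_I_mul_ofReal, norm_neg, norm_mul, norm_I, one_mul, norm_real,
    Real.norm_eq_abs]
  push_cast
  ring

theorem Complex.neg_I_mul_ofReal_cpow {u : ℝ} (hu : u ≠ 0) (α : ℝ) :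
    (-(I * u)) ^ (α : ℂ) =
      (|u| ^ α : ℝ) * (Real.cos (π * α / 2) - I * Real.sign u * Real.sin (π * α / 2)) := by
  have hne : -(I * u) ≠ 0 := by simpa using hu
  rw [cpow_def_of_ne_zero hne, log_neg_I_mul_ofReal, Real.rpow_def_of_pos (abs_pos.2 hu),
    show ((Real.log |u| : ℂ) - Real.sign u * (π / 2) * I) * α =
      ((Real.log |u| * α : ℝ) : ℂ) + ((-(Real.sign u * (π * α / 2)) : ℝ) : ℂ) * I by
        push_cast; ring,
    exp_add, exp_mul_I, ← ofReal_exp, ← ofReal_cos, ← ofReal_sin]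
  rcases Real.sign_apply_eq_of_ne_zero u hu with h | h <;>
  · simp only [h, Real.cos_neg, Real.sin_neg, neg_mul, one_mul, neg_neg]
    push_cast
    ring

/-- For `α ∈ (0,2]`, `α ≠ 1`, and real `u`:
`|u|^α (1 − i·sgn(u)·tan(πα/2)) = (−iu)^α / cos(πα/2)`,
with the principal complex power (branch cut along `(−∞,0]`). -/
theorem nuAlpha_eq_cpow {α : ℝ} (hα0 : 0 < α) (hα2 : α ≤ 2) (hα1 : α ≠ 1) (u : ℝ) :
    ((|u| ^ α : ℝ) : ℂ) *
        (1 - Complex.I * (Real.sign u : ℝ) * (Real.tan (Real.pi * α / 2) : ℝ)) =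
      (-(Complex.I * (u : ℂ))) ^ (α : ℂ) / ((Real.cos (Real.pi * α / 2) : ℝ) : ℂ) := by
  have hcos : ((Real.cos (π * α / 2) : ℝ) : ℂ) ≠ 0 :=
    ofReal_ne_zero.2 (Real.cos_pi_mul_div_two_ne_zero hα0 hα2 hα1)
  rcases eq_or_ne u 0 with rfl | hu
  · simp [Real.zero_rpow hα0.ne', zero_cpow (ofReal_ne_zero.2 hα0.ne')]
  rw [neg_I_mul_ofReal_cpow hu, Real.tan_eq_sin_div_cos, eq_div_iff hcos]
  push_cast at hcos ⊢
  field_simp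
end

section
/- ∫_{ℝ^N} e^{−‖u‖²/2} Δ(u)² du = (2π)^{N/2} ∏_{j=1}^{N} j!. -/
open MeasureTheory Real Finset

open Polynomial

noncomputable def Hpoly (n : ℕ) : Polynomial ℝ := (Polynomial.hermite n).map (Int.castRingHom ℝ)

lemma Hpoly_monic (n : ℕ) : (Hpoly n).Monic := (hermite_monic n).map _

lemma Hpoly_natDegree (n : ℕ) : (Hpoly n).natDegree = n := by
  rw [Hpoly, (hermite_monic n).natDegree_map, natDegree_hermite]

lemma Hpoly_succ (n : ℕ) : Hpoly (n+1) = X * Hpoly n - derivative (Hpoly n) := by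
  rw [Hpoly, hermite_succ, Polynomial.map_sub, Polynomial.map_mul, Polynomial.map_X,
    ← derivative_map]
  rfl

lemma Hpoly_zero : Hpoly 0 = 1 := by
  rw [Hpoly, hermite_zero, Polynomial.map_C]; simp

lemma gauss_hasDeriv (x : ℝ) :
    HasDerivAt (fun y : ℝ => Real.exp (-(y^2/2))) (-x * Real.exp (-(x^2/2))) x := by
  have h1 : HasDerivAt (fun y : ℝ => -(y^2/2)) (-x) x := by
    have := (hasDerivAt_pow 2 x).div_const 2
    exact this.neg.congr_deriv (by norm_num)
  simpa [mul_comm] using h1.exp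

lemma gpoly_hasDeriv (n : ℕ) (x : ℝ) :
    HasDerivAt (fun y : ℝ => eval y (Hpoly n) * Real.exp (-(y^2/2)))
      (-(eval x (Hpoly (n+1)) * Real.exp (-(x^2/2)))) x := by
  have h := ((Hpoly n).hasDerivAt x).mul (gauss_hasDeriv x)
  refine h.congr_deriv ?_
  rw [Hpoly_succ]
  simp only [eval_sub, eval_mul, eval_X]
  ring

lemma integrable_poly_gauss (p : Polynomial ℝ) :
    Integrable (fun x : ℝ => eval x p * Real.exp (-(x^2/2))) := by
  induction p using Polynomial.induction_on' with
  | add p q hp hq => exact (hp.add hq).congr (Filter.Eventually.of_forall fun x => by simp [add_mul])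
  | monomial k c =>
    have h : Integrable (fun x : ℝ => x ^ (k:ℝ) * Real.exp (-(1/2 : ℝ) * x^2)) :=
      integrable_rpow_mul_exp_neg_mul_sq (by norm_num)
        (lt_of_lt_of_le neg_one_lt_zero (Nat.cast_nonneg k))
    have h2 := h.abs.const_mul |c|
    refine h2.mono' ?_ ?_
    · exact (Continuous.mul (by continuity) (by continuity)).aestronglyMeasurable
    · filter_upwards with x
      simp only [eval_monomial, norm_mul, norm_pow, Real.norm_eq_abs, Real.norm_eq_abs]
      have he : -(x^2/2) = -(1/2:ℝ) * x^2 := by ring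
      rw [he, Real.rpow_natCast, abs_mul, abs_pow, mul_assoc]

lemma parts_step (n : ℕ) (p : Polynomial ℝ) :
    ∫ x : ℝ, eval x p * (eval x (Hpoly (n+1)) * Real.exp (-(x^2/2)))
      = ∫ x : ℝ, eval x (derivative p) * (eval x (Hpoly n) * Real.exp (-(x^2/2))) := by
  have key := MeasureTheory.integral_mul_deriv_eq_deriv_mul_of_integrable
    (u := fun x : ℝ => eval x p) (u' := fun x => eval x (derivative p))
    (v := fun x : ℝ => eval x (Hpoly n) * Real.exp (-(x^2/2)))
    (v' := fun x : ℝ => -(eval x (Hpoly (n+1)) * Real.exp (-(x^2/2))))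
    (fun x _ => p.hasDerivAt x) (fun x _ => gpoly_hasDeriv n x) ?_ ?_ ?_
  · have l1 : ∫ x : ℝ, eval x p * -(eval x (Hpoly (n+1)) * Real.exp (-(x^2/2)))
        = -∫ x : ℝ, eval x p * (eval x (Hpoly (n+1)) * Real.exp (-(x^2/2))) := by
      rw [← integral_neg]; congr 1; funext x; ring
    rw [l1] at key
    have := neg_injective key
    rw [this]
  · have := (integrable_poly_gauss (p * Hpoly (n+1))).neg
    apply this.congr
    filter_upwards with x
    show -(eval x (p * Hpoly (n+1)) * _) = eval x p * -(_ * _)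
    rw [eval_mul]; ring
  · have := integrable_poly_gauss (derivative p * Hpoly n)
    apply this.congr
    filter_upwards with x
    show eval x (derivative p * Hpoly n) * _ = eval x (derivative p) * (eval x (Hpoly n) * _)
    rw [eval_mul]; ring
  · have := integrable_poly_gauss (p * Hpoly n)
    apply this.congr
    filter_upwards with x
    show eval x (p * Hpoly n) * _ = eval x p * (eval x (Hpoly n) * _)
    rw [eval_mul]; ring

lemma parts_iter (n : ℕ) (p : Polynomial ℝ) :
    ∫ x : ℝ, eval x p * (eval x (Hpoly n) * Real.exp (-(x^2/2)))
      = ∫ x : ℝ, eval x (derivative^[n] p) * Real.exp (-(x^2/2)) := by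
  induction n generalizing p with
  | zero => simp [Hpoly_zero]
  | succ n ih =>
    rw [parts_step n p, ih (derivative p), ← Function.iterate_succ_apply]

lemma integral_gauss_half : ∫ x : ℝ, Real.exp (-(x^2/2)) = Real.sqrt (2*π) := by
  have h : ∫ x : ℝ, Real.exp (-(x^2/2)) = ∫ x : ℝ, Real.exp (-(1/2:ℝ) * x^2) := by
    congr 1; funext x; ring_nf
  rw [h, integral_gaussian]
  norm_num [mul_comm]

lemma iterate_derivative_Hpoly_self (n : ℕ) :
    derivative^[n] (Hpoly n) = C (n.factorial : ℝ) := by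
  have hdeg : (derivative^[n] (Hpoly n)).natDegree = 0 := by
    have h1 := natDegree_iterate_derivative (Hpoly n) n
    rw [Hpoly_natDegree] at h1
    omega
  have h2 := (derivative^[n] (Hpoly n)).eq_C_of_natDegree_le_zero (le_of_eq hdeg)
  rw [h2, coeff_iterate_derivative]
  have h3 : (Hpoly n).coeff (0 + n) = 1 := by
    have := (Hpoly_monic n).leadingCoeff
    rwa [leadingCoeff, Hpoly_natDegree, zero_add] at *
  rw [h3, nsmul_eq_mul, mul_one, Nat.zero_add, Nat.descFactorial_self]

lemma orth (n m : ℕ) :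
    ∫ x : ℝ, eval x (Hpoly n) * eval x (Hpoly m) * Real.exp (-(x^2/2))
      = if n = m then Real.sqrt (2*π) * n.factorial else 0 := by
  have comm : ∀ a b c : ℕ, (∫ x : ℝ, eval x (Hpoly a) * eval x (Hpoly b) * Real.exp (-(x^2/2)))
      = ∫ x : ℝ, eval x (Hpoly c) * (eval x (Hpoly (a + b - c)) * Real.exp (-(x^2/2))) ∨ True := by
    intro a b c; exact Or.inr trivial
  have assoc : ∀ a b : ℕ, (∫ x : ℝ, eval x (Hpoly a) * eval x (Hpoly b) * Real.exp (-(x^2/2)))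
      = ∫ x : ℝ, eval x (Hpoly a) * (eval x (Hpoly b) * Real.exp (-(x^2/2))) := by
    intro a b; congr 1; funext x; ring
  have swap : ∀ a b : ℕ, (∫ x : ℝ, eval x (Hpoly a) * eval x (Hpoly b) * Real.exp (-(x^2/2)))
      = ∫ x : ℝ, eval x (Hpoly b) * (eval x (Hpoly a) * Real.exp (-(x^2/2))) := by
    intro a b; congr 1; funext x; ring
  rcases lt_trichotomy n m with h | rfl | h
  · rw [if_neg h.ne, assoc n m, parts_iter m (Hpoly n),
      iterate_derivative_eq_zero (by rw [Hpoly_natDegree]; exact h)]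
    simp
  · rw [if_pos rfl, assoc n n, parts_iter n (Hpoly n), iterate_derivative_Hpoly_self]
    simp only [eval_C]
    rw [MeasureTheory.integral_const_mul, integral_gauss_half]
    ring
  · rw [if_neg h.ne', swap n m, parts_iter n (Hpoly m),
      iterate_derivative_eq_zero (by rw [Hpoly_natDegree]; exact h)]
    simp

lemma vandermonde_prod_eq_det (N : ℕ) (u : Fin N → ℝ) :
    (∏ p ∈ Finset.univ.filter (fun p : Fin N × Fin N => p.1 < p.2), (u p.2 - u p.1))
      = (Matrix.of (fun i j : Fin N => eval (u i) (Hpoly (j:ℕ)))).det := by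
  rw [← Matrix.det_eval_matrixOfPolynomials_eq_det_vandermonde u (fun j => Hpoly (j:ℕ))
      (fun i => Hpoly_natDegree _) (fun i => Hpoly_monic _), Matrix.det_vandermonde]
  rw [Finset.prod_sigma']
  symm
  apply Finset.prod_bij (fun (x : Σ _ : Fin N, Fin N) _ => (x.1, x.2))
  · rintro ⟨i, j⟩ hij
    simp only [Finset.mem_sigma, Finset.mem_Ioi] at hij
    simp [hij.2]
  · rintro ⟨i, j⟩ hij ⟨i', j'⟩ hij' h
    simpa using h
  · rintro ⟨i, j⟩ hij
    simp only [Finset.mem_filter, Finset.mem_univ, true_and] at hij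
    exact ⟨⟨i, j⟩, by simp [hij], rfl⟩
  · rintro ⟨i, j⟩ hij
    rfl


/-- The GUE Selberg/Mehta integral:
`∫_{ℝ^N} e^{−‖u‖²/2} Δ(u)² du = (2π)^{N/2} ∏_{j=1}^{N} j!`, where
`Δ(u) = ∏_{a<b}(u_b − u_a)` is the Vandermonde determinant (equivalently,
the ratio of the Gaussian integral to the Gaussian–Vandermonde integral is
`Γ(N²/2)/(Γ(N/2)·∏_{j=0}^{N} j!)`). -/
theorem gaussian_vandermonde_integral (N : ℕ) :
    ∫ u : Fin N → ℝ,
        Real.exp (-(∑ j, (u j) ^ 2) / 2) *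
          (∏ p ∈ Finset.univ.filter (fun p : Fin N × Fin N => p.1 < p.2),
            (u p.2 - u p.1)) ^ 2 =
      (2 * Real.pi) ^ ((N : ℝ) / 2) *
        ∏ j ∈ Finset.range (N + 1), (Nat.factorial j : ℝ) := by
  classical
  set F : ℕ → ℕ → ℝ → ℝ := fun a b x => eval x (Hpoly a) * eval x (Hpoly b) * Real.exp (-(x^2/2)) with hF
  set c : Equiv.Perm (Fin N) → ℝ := fun σ => ((Equiv.Perm.sign σ : ℤ) : ℝ) with hc
  set P : Equiv.Perm (Fin N) → (Fin N → ℝ) → ℝ :=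
    fun σ u => ∏ j, eval (u j) (Hpoly ((σ j : ℕ))) with hP
  -- determinant expansion
  have hdet : ∀ u : Fin N → ℝ,
      (∏ p ∈ Finset.univ.filter (fun p : Fin N × Fin N => p.1 < p.2), (u p.2 - u p.1))
        = ∑ σ : Equiv.Perm (Fin N), c σ * P σ u := by
    intro u
    rw [vandermonde_prod_eq_det, ← Matrix.det_transpose, Matrix.det_apply']
    rfl
  -- pointwise expansion of the integrand
  have expand : ∀ u : Fin N → ℝ,
      Real.exp (-(∑ j, (u j) ^ 2) / 2) *
          (∏ p ∈ Finset.univ.filter (fun p : Fin N × Fin N => p.1 < p.2), (u p.2 - u p.1)) ^ 2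
        = ∑ σ : Equiv.Perm (Fin N), ∑ τ : Equiv.Perm (Fin N),
            (c σ * c τ) * ∏ j, F ((σ j : ℕ)) ((τ j : ℕ)) (u j) := by
    intro u
    have hexp : Real.exp (-(∑ j, (u j) ^ 2) / 2) = ∏ j, Real.exp (-((u j)^2/2)) := by
      rw [← Real.exp_sum]
      congr 1
      simp [neg_div, Finset.sum_div]
    rw [hdet, sq, Finset.sum_mul_sum, Finset.mul_sum]
    refine Finset.sum_congr rfl fun σ _ => ?_
    rw [Finset.mul_sum]
    refine Finset.sum_congr rfl fun τ _ => ?_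
    have : ∏ j, F ((σ j : ℕ)) ((τ j : ℕ)) (u j)
        = P σ u * P τ u * ∏ j, Real.exp (-((u j)^2/2)) := by
      rw [hP, ← Finset.prod_mul_distrib, ← Finset.prod_mul_distrib]
    rw [this, hexp]
    ring
  -- integrability of each term
  have hint : ∀ σ τ : Equiv.Perm (Fin N),
      Integrable (fun u : Fin N → ℝ => ∏ j, F ((σ j : ℕ)) ((τ j : ℕ)) (u j)) := by
    intro σ τ
    apply MeasureTheory.Integrable.fintype_prod (f := fun j x => F ((σ j : ℕ)) ((τ j : ℕ)) x)
    intro j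
    have := integrable_poly_gauss (Hpoly ((σ j : ℕ)) * Hpoly ((τ j : ℕ)))
    apply this.congr
    filter_upwards with x
    rw [eval_mul]
  -- compute the integral
  rw [show (fun u : Fin N → ℝ =>
      Real.exp (-(∑ j, (u j) ^ 2) / 2) *
          (∏ p ∈ Finset.univ.filter (fun p : Fin N × Fin N => p.1 < p.2), (u p.2 - u p.1)) ^ 2)
      = fun u => ∑ σ : Equiv.Perm (Fin N), ∑ τ : Equiv.Perm (Fin N),
            (c σ * c τ) * ∏ j, F ((σ j : ℕ)) ((τ j : ℕ)) (u j) from funext expand]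
  rw [MeasureTheory.integral_finset_sum _ fun σ _ =>
    MeasureTheory.integrable_finset_sum _ fun τ _ => ((hint σ τ).const_mul _)]
  have hswap : ∀ σ : Equiv.Perm (Fin N),
      (∫ u : Fin N → ℝ, ∑ τ : Equiv.Perm (Fin N),
        (c σ * c τ) * ∏ j, F ((σ j : ℕ)) ((τ j : ℕ)) (u j))
      = ∑ τ : Equiv.Perm (Fin N),
        (c σ * c τ) * ∫ u : Fin N → ℝ, ∏ j, F ((σ j : ℕ)) ((τ j : ℕ)) (u j) := by
    intro σ
    rw [MeasureTheory.integral_finset_sum _ fun τ _ => ((hint σ τ).const_mul _)]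
    exact Finset.sum_congr rfl fun τ _ => MeasureTheory.integral_const_mul _ _
  simp only [hswap]
  -- evaluate each product integral using Fubini and orthogonality
  have hval : ∀ σ τ : Equiv.Perm (Fin N),
      (∫ u : Fin N → ℝ, ∏ j, F ((σ j : ℕ)) ((τ j : ℕ)) (u j))
      = ∏ j, (if ((σ j : ℕ)) = ((τ j : ℕ)) then Real.sqrt (2*π) * ((σ j : ℕ)).factorial else 0) := by
    intro σ τ
    rw [MeasureTheory.integral_fintype_prod_volume_eq_prod (f := fun j x => F ((σ j : ℕ)) ((τ j : ℕ)) x)]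
    exact Finset.prod_congr rfl fun j _ => orth _ _
  simp only [hval]
  -- off-diagonal terms vanish
  have hdiag : ∀ σ τ : Equiv.Perm (Fin N), σ ≠ τ →
      (∏ j, (if ((σ j : ℕ)) = ((τ j : ℕ)) then Real.sqrt (2*π) * ((σ j : ℕ)).factorial else 0)) = 0 := by
    intro σ τ hne
    obtain ⟨j, hj⟩ : ∃ j, σ j ≠ τ j := by
      by_contra h
      push_neg at h
      exact hne (Equiv.ext h)
    refine Finset.prod_eq_zero (Finset.mem_univ j) ?_
    rw [if_neg (fun h => hj (Fin.ext h))]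
  have hsum : ∀ σ : Equiv.Perm (Fin N),
      (∑ τ : Equiv.Perm (Fin N), (c σ * c τ) *
        ∏ j, (if ((σ j : ℕ)) = ((τ j : ℕ)) then Real.sqrt (2*π) * ((σ j : ℕ)).factorial else 0))
      = Real.sqrt (2*π) ^ N * ∏ j : Fin N, ((j : ℕ).factorial : ℝ) := by
    intro σ
    rw [Finset.sum_eq_single σ]
    · have hc2 : c σ * c σ = 1 := by
        rcases Int.units_eq_one_or (Equiv.Perm.sign σ) with h | h <;> simp [hc, h]
      rw [hc2, one_mul]
      simp only [eq_self_iff_true, if_true]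
      rw [Finset.prod_mul_distrib, Finset.prod_const, Finset.card_univ, Fintype.card_fin]
      congr 1
      exact Equiv.prod_comp σ (fun j => (((j : ℕ)).factorial : ℝ))
    · intro τ _ hne
      rw [hdiag σ τ (Ne.symm hne), mul_zero]
    · intro h
      exact absurd (Finset.mem_univ σ) h
  simp only [hsum]
  rw [Finset.sum_const, Finset.card_univ, Fintype.card_perm, Fintype.card_fin, nsmul_eq_mul]
  -- final arithmetic
  have h1 : Real.sqrt (2*π) ^ N = (2 * π) ^ ((N : ℝ) / 2) := by
    rw [Real.sqrt_eq_rpow, ← Real.rpow_natCast ((2*π) ^ ((1:ℝ)/2)) N,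
      ← Real.rpow_mul (by positivity)]
    congr 1
    ring
  have h2 : (∏ j : Fin N, ((j : ℕ).factorial : ℝ)) = ∏ j ∈ Finset.range N, (Nat.factorial j : ℝ) :=
    Fin.prod_univ_eq_prod_range (fun n => (n.factorial : ℝ)) N
  rw [h1, h2, Finset.prod_range_succ]
  ring
end
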